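/- For every θ ∈ (0,1) there exist constants C > 0 and δ₀ ∈ (0,1), depending only on θ, such that for every δ ∈ (0,δ₀) and every finitely supported function l : ℤ → ℤ one has ∏_{n∈ℤ} (1 + l_n²·w(n)⁴) ≤ exp( C·δ^{−5/θ} + δ·∑_{n∈ℤ} |l_n|·w(n)^{θ/2} ). -/

import Mathlib

/-!
Write `x = |l n| ≥ 1` (it is a nonzero integer) and `w = wR n ≥ 1`. Then
`1 + x²w⁴ ≤ exp (x (3 + 4 log w))`, and beyond a cutoff `R(δ) ≍ δ^(-4/θ)` the coefficient
`3 + 4 log w` is at most `δ w^(θ/2)`, so those factors are absorbed by the linear term. For the at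
most `3R` indices below the cutoff, `2 log x ≤ δ x + 2 log (2/δ)` leaves a penalty
`2 log (2/δ) + 4 log R = O(δ⁻¹)` per index, and `R · δ⁻¹ = O(δ^(-5/θ))`.
-/

open scoped BigOperators

/-- `w(n) = max(1, |n|)` as a real number. -/
noncomputable def wR (n : ℤ) : ℝ := max 1 |(n : ℝ)|

open Real Finset

lemma two_mul_log_le {t x : ℝ} (ht : 0 < t) (hx : 0 < x) :
    2 * log x ≤ t * x + 2 * log (2 / t) - 2 := by
  have h := log_le_sub_one_of_pos (show 0 < t * x / 2 by positivity)
  rw [log_div (by positivity) two_ne_zero, log_mul ht.ne' hx.ne'] at h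
  rw [log_div two_ne_zero ht.ne']
  linarith

lemma one_add_sq_mul_pow_four_le_exp {x w : ℝ} (hx : 1 ≤ x) (hw : 1 ≤ w) :
    1 + x ^ 2 * w ^ 4 ≤ exp (1 + 2 * log x + 4 * log w) := by
  have hxw : 1 ≤ x ^ 2 * w ^ 4 := one_le_mul_of_one_le_of_one_le (one_le_pow₀ hx) (one_le_pow₀ hw)
  have he : 2 ≤ exp 1 := by linarith [add_one_le_exp 1]
  have hx2 : exp (2 * log x) = x ^ 2 := by
    rw [show 2 * log x = log (x ^ 2) by rw [log_pow]; norm_num, exp_log (by positivity)]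
  have hw4 : exp (4 * log w) = w ^ 4 := by
    rw [show 4 * log w = log (w ^ 4) by rw [log_pow]; norm_num, exp_log (by positivity)]
  rw [exp_add, exp_add, hx2, hw4]
  nlinarith

lemma one_add_sq_mul_pow_four_le_exp_mul_add {t x w : ℝ} (ht : 0 < t) (hx : 1 ≤ x) (hw : 1 ≤ w) :
    1 + x ^ 2 * w ^ 4 ≤ exp (t * x + 2 * log (2 / t) + 4 * log w) := by
  refine (one_add_sq_mul_pow_four_le_exp hx hw).trans (exp_le_exp.mpr ?_)
  linarith [two_mul_log_le ht (by linarith : 0 < x)]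

lemma one_add_sq_mul_pow_four_le_exp_mul {x w : ℝ} (hx : 1 ≤ x) (hw : 1 ≤ w) :
    1 + x ^ 2 * w ^ 4 ≤ exp (x * (3 + 4 * log w)) := by
  refine (one_add_sq_mul_pow_four_le_exp hx hw).trans (exp_le_exp.mpr ?_)
  have hlogx : log x ≤ x - 1 := log_le_sub_one_of_pos (by linarith)
  nlinarith [log_nonneg hw]

noncomputable def cutoff (θ δ : ℝ) : ℝ := ((3 + 16 / θ) / δ) ^ (4 / θ)

lemma one_le_cutoff {θ δ : ℝ} (hθ : 0 < θ) (hδ0 : 0 < δ) (hδ1 : δ ≤ 1) : 1 ≤ cutoff θ δ :=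
  one_le_rpow (by rw [le_div_iff₀ hδ0]; linarith [div_pos (by norm_num : (0:ℝ) < 16) hθ])
    (by positivity)

lemma three_add_four_log_le_of_cutoff_le {θ δ w : ℝ} (hθ : 0 < θ) (hδ : 0 < δ) (hw1 : 1 ≤ w)
    (hw : cutoff θ δ ≤ w) : 3 + 4 * log w ≤ δ * w ^ (θ / 2) := by
  set u := w ^ (θ / 4)
  have hu1 : 1 ≤ u := one_le_rpow hw1 (by positivity)
  have hu : (3 + 16 / θ) / δ ≤ u := by
    calc (3 + 16 / θ) / δ = cutoff θ δ ^ (θ / 4) := by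
          rw [cutoff, ← rpow_mul (by positivity), div_mul_div_cancel₀ hθ.ne',
            div_self four_ne_zero, rpow_one]
      _ ≤ u := rpow_le_rpow (by unfold cutoff; positivity) hw (by positivity)
  have hlog : 4 * log w = 16 / θ * log u := by
    rw [log_rpow (by linarith)]; field_simp; ring
  have hsq : w ^ (θ / 2) = u * u := by
    rw [← rpow_add (by linarith)]; ring_nf
  have hlogu : log u ≤ u := by linarith [log_le_sub_one_of_pos (by linarith : 0 < u)]
  rw [div_le_iff₀ hδ] at hu
  rw [hlog, hsq]
  nlinarith [div_pos (by norm_num : (0:ℝ) < 16) hθ]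

lemma one_add_sq_mul_pow_four_le_exp_cutoff {θ δ x w : ℝ} (hθ : 0 < θ) (hδ : 0 < δ) (hx : 1 ≤ x)
    (hw : 1 ≤ w) :
    1 + x ^ 2 * w ^ 4 ≤ exp (δ * (x * w ^ (θ / 2))
      + if w ≤ cutoff θ δ then 2 * log (2 / δ) + 4 * log (cutoff θ δ) else 0) := by
  have hwθ : 1 ≤ w ^ (θ / 2) := one_le_rpow hw (by positivity)
  split_ifs with hwR
  · refine (one_add_sq_mul_pow_four_le_exp_mul_add hδ hx hw).trans (exp_le_exp.mpr ?_)
    have hδx : δ * x ≤ δ * (x * w ^ (θ / 2)) := by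
      gcongr; exact le_mul_of_one_le_right (by linarith) hwθ
    have hlog : log w ≤ log (cutoff θ δ) := log_le_log (by linarith) hwR
    linarith
  · refine (one_add_sq_mul_pow_four_le_exp_mul hx hw).trans (exp_le_exp.mpr ?_)
    have h := three_add_four_log_le_of_cutoff_le hθ hδ hw (not_le.mp hwR).le
    calc x * (3 + 4 * log w) ≤ x * (δ * w ^ (θ / 2)) := by gcongr
      _ = δ * (x * w ^ (θ / 2)) + 0 := by ring

lemma one_le_wR (n : ℤ) : 1 ≤ wR n := le_max_left _ _

lemma card_filter_wR_le (s : Finset ℤ) {R : ℝ} (hR : 1 ≤ R) :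
    (#(s.filter (wR · ≤ R)) : ℝ) ≤ 3 * R := by
  have hsub : s.filter (wR · ≤ R) ⊆ Icc (-⌊R⌋) ⌊R⌋ := by
    intro n hn
    have hnR : |(n : ℝ)| ≤ R := (le_max_right _ _).trans (mem_filter.mp hn).2
    rw [mem_Icc, ← abs_le, Int.le_floor, Int.cast_abs]
    exact hnR
  have hfloor : (1 : ℤ) ≤ ⌊R⌋ := Int.le_floor.mpr (by simpa using hR)
  have hcard : (#(Icc (-⌊R⌋) ⌊R⌋) : ℝ) = 2 * ⌊R⌋ + 1 := by
    rw [Int.card_Icc, show ⌊R⌋ + 1 - -⌊R⌋ = 2 * ⌊R⌋ + 1 by ring]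
    exact_mod_cast Int.toNat_of_nonneg (by omega)
  calc (#(s.filter (wR · ≤ R)) : ℝ) ≤ #(Icc (-⌊R⌋) ⌊R⌋) := by exact_mod_cast card_le_card hsub
    _ = 2 * ⌊R⌋ + 1 := hcard
    _ ≤ 3 * R := by linarith [Int.floor_le R]

lemma cutoff_div_le {θ δ : ℝ} (hθ0 : 0 < θ) (hθ1 : θ ≤ 1) (hδ0 : 0 < δ) (hδ1 : δ ≤ 1) :
    cutoff θ δ / δ ≤ (3 + 16 / θ) ^ (4 / θ) * δ ^ (-(5 / θ)) := by
  have hexp : δ ^ (5 / θ) ≤ δ ^ (4 / θ) * δ := by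
    rw [← rpow_add_one hδ0.ne']
    refine rpow_le_rpow_of_exponent_ge hδ0 hδ1 ?_
    rw [show 5 / θ = 4 / θ + 1 / θ by ring]
    gcongr
    rwa [le_div_iff₀ hθ0, one_mul]
  rw [cutoff, div_rpow (by positivity) hδ0.le, div_div, div_eq_mul_inv, rpow_neg hδ0.le]
  gcongr

lemma cutoff_mul_log_le {θ δ : ℝ} (hθ0 : 0 < θ) (hθ1 : θ ≤ 1) (hδ0 : 0 < δ) (hδ1 : δ ≤ 1) :
    3 * cutoff θ δ * (2 * log (2 / δ) + 4 * log (cutoff θ δ))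
      ≤ 3 * (3 + 16 / θ) ^ (4 / θ) * (4 + 16 * (3 + 16 / θ) / θ) * δ ^ (-(5 / θ)) := by
  set K := 3 + 16 / θ
  have hlog2 : log (2 / δ) ≤ 2 / δ := by
    linarith [log_le_sub_one_of_pos (show 0 < 2 / δ by positivity)]
  have hlogR : log (cutoff θ δ) ≤ 4 / θ * (K / δ) := by
    rw [cutoff, log_rpow (by positivity)]
    gcongr
    linarith [log_le_sub_one_of_pos (show 0 < K / δ by positivity)]
  have hbracket : 2 * log (2 / δ) + 4 * log (cutoff θ δ) ≤ (4 + 16 * K / θ) / δ := by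
    have : (4 + 16 * K / θ) / δ = 2 * (2 / δ) + 4 * (4 / θ * (K / δ)) := by ring
    linarith
  calc 3 * cutoff θ δ * (2 * log (2 / δ) + 4 * log (cutoff θ δ))
      ≤ 3 * cutoff θ δ * ((4 + 16 * K / θ) / δ) := by
        gcongr; unfold cutoff; positivity
    _ = 3 * (4 + 16 * K / θ) * (cutoff θ δ / δ) := by ring
    _ ≤ 3 * (4 + 16 * K / θ) * (K ^ (4 / θ) * δ ^ (-(5 / θ))) := by
        gcongr; exact cutoff_div_le hθ0 hθ1 hδ0 hδ1
    _ = _ := by ring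

theorem stmt5 (θ : ℝ) (hθ : θ ∈ Set.Ioo (0:ℝ) 1) :
    ∃ C > (0:ℝ), ∃ δ₀ ∈ Set.Ioo (0:ℝ) 1, ∀ δ ∈ Set.Ioo (0:ℝ) δ₀, ∀ l : ℤ →₀ ℤ,
      ∏ n ∈ l.support, (1 + (l n : ℝ) ^ 2 * wR n ^ 4)
        ≤ Real.exp (C * δ ^ (-(5 / θ))
            + δ * ∑ n ∈ l.support, |(l n : ℝ)| * wR n ^ (θ / 2)) := by
  obtain ⟨hθ0, hθ1⟩ := hθ
  refine ⟨3 * (3 + 16 / θ) ^ (4 / θ) * (4 + 16 * (3 + 16 / θ) / θ), by positivity, 1 / 2,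
    by norm_num, fun δ ⟨hδ0, hδ⟩ l => ?_⟩
  have hδ1 : δ ≤ 1 := by linarith
  set R := cutoff θ δ
  set c := 2 * log (2 / δ) + 4 * log R
  have hc : 0 ≤ c := by
    have h2δ : 0 ≤ log (2 / δ) := log_nonneg (by rw [le_div_iff₀ hδ0]; linarith)
    have hR : 0 ≤ log R := log_nonneg (one_le_cutoff hθ0 hδ0 hδ1)
    positivity
  have hterm : ∀ n ∈ l.support, 1 + (l n : ℝ) ^ 2 * wR n ^ 4
      ≤ exp (δ * (|(l n : ℝ)| * wR n ^ (θ / 2)) + if wR n ≤ R then c else 0) := by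
    intro n hn
    have hx : (1 : ℝ) ≤ |(l n : ℝ)| := by
      rw [← Int.cast_abs]; exact_mod_cast Int.one_le_abs (Finsupp.mem_support_iff.mp hn)
    rw [← sq_abs]
    exact one_add_sq_mul_pow_four_le_exp_cutoff hθ0 hδ0 hx (one_le_wR n)
  have hpenalty : ∑ n ∈ l.support, (if wR n ≤ R then c else 0) ≤ 3 * R * c := by
    rw [sum_ite, sum_const_zero, add_zero, sum_const, nsmul_eq_mul]
    gcongr
    exact card_filter_wR_le _ (one_le_cutoff hθ0 hδ0 hδ1)
  calc ∏ n ∈ l.support, (1 + (l n : ℝ) ^ 2 * wR n ^ 4)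
      ≤ ∏ n ∈ l.support, exp (δ * (|(l n : ℝ)| * wR n ^ (θ / 2)) + if wR n ≤ R then c else 0) :=
        prod_le_prod (fun n _ => by positivity) hterm
    _ = exp (δ * ∑ n ∈ l.support, |(l n : ℝ)| * wR n ^ (θ / 2)
          + ∑ n ∈ l.support, (if wR n ≤ R then c else 0)) := by
        rw [← exp_sum, sum_add_distrib, mul_sum]
    _ ≤ _ := by
        rw [add_comm]
        gcongr
        exact hpenalty.trans (cutoff_mul_log_le hθ0 hθ1.le hδ0 hδ1)
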